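/- For any infinitary propositional formula F over σ, any set A ⊆ σ of atoms, and any interpretation I ⊆ σ: I is an A-stable model of F if and only if I is a minimal model with respect to set inclusion of the formula F^I ∧ ⋀_{p ∈ I \ A} p (the conjunction of F^I with the set of all atoms in I \ A). -/

import Mathlib

/-- Infinitary propositional formulas over signature `σ`:
atoms, conjunctions and disjunctions of (index-)sets of formulas, implication. -/
inductive Formula (σ : Type) : Type 1
  | atom : σ → Formula σ
  | conj : (ι : Type) → (ι → Formula σ) → Formula σ
  | disj : (ι : Type) → (ι → Formula σ) → Formula σ
  | imp : Formula σ → Formula σ → Formula σ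

namespace Formula

variable {σ : Type}

/-- `⊥` is the empty disjunction. -/
def bot : Formula σ := Formula.disj Empty (fun e => e.elim)

/-- Binary conjunction `F ∧ G`. -/
def and (F G : Formula σ) : Formula σ := Formula.conj Bool (fun b => if b then F else G)

/-- Binary disjunction `F ∨ G`. -/
def or (F G : Formula σ) : Formula σ := Formula.disj Bool (fun b => if b then F else G)

/-- Negation `¬F` abbreviates `F → ⊥`. -/
def neg (F : Formula σ) : Formula σ := Formula.imp F bot

/-- Conjunction of a set of atoms. -/
def conjAtoms (S : Set σ) : Formula σ := Formula.conj S (fun p => Formula.atom p.val)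

/-- Satisfaction of an infinitary formula by an interpretation `I ⊆ σ`. -/
def Sat (I : Set σ) : Formula σ → Prop
  | .atom p => p ∈ I
  | .conj _ f => ∀ i, Sat I (f i)
  | .disj _ f => ∃ i, Sat I (f i)
  | .imp F G => Sat I F → Sat I G

open Classical in
/-- The reduct `F^I`. -/
noncomputable def reduct (I : Set σ) : Formula σ → Formula σ
  | .atom p => if p ∈ I then Formula.atom p else bot
  | .conj ι f => Formula.conj ι (fun i => reduct I (f i))
  | .disj ι f => Formula.disj ι (fun i => reduct I (f i))
  | .imp F G => if Sat I (Formula.imp F G) then Formula.imp (reduct I F) (reduct I G) else bot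

/-- `I` is an `A`-stable model of `F`: `I` is minimal w.r.t. `≤_A`
(`J ≤_A I` iff `J ⊆ I` and `I \ J ⊆ A`) among interpretations satisfying `F^I`. -/
def AStable (A : Set σ) (I : Set σ) (F : Formula σ) : Prop :=
  Sat I (reduct I F) ∧ ∀ J : Set σ, J ⊆ I → I \ J ⊆ A → Sat J (reduct I F) → J = I

/-- A stable model is a `σ`-stable model. -/
def Stable (I : Set σ) (F : Formula σ) : Prop := AStable Set.univ I F

/-- The strictly positive atoms `P(F)`. -/
def spos : Formula σ → Set σ
  | .atom p => {p}
  | .conj _ f => ⋃ i, spos (f i)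
  | .disj _ f => ⋃ i, spos (f i)
  | .imp _ H => spos H

/-- `F` is (syntactically) the formula `⊥`, i.e. an empty disjunction. -/
def IsBot : Formula σ → Prop
  | .disj ι _ => IsEmpty ι
  | _ => False

open Classical in
mutual
/-- Positive nonnegated atoms `Pnn(F)`. -/
noncomputable def pnn : Formula σ → Set σ
  | .atom p => {p}
  | .conj _ f => ⋃ i, pnn (f i)
  | .disj _ f => ⋃ i, pnn (f i)
  | .imp G H => if IsBot H then ∅ else nnn G ∪ pnn H

/-- Negative nonnegated atoms `Nnn(F)`. -/
noncomputable def nnn : Formula σ → Set σ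
  | .atom _ => ∅
  | .conj _ f => ⋃ i, nnn (f i)
  | .disj _ f => ⋃ i, nnn (f i)
  | .imp G H => if IsBot H then ∅ else pnn G ∪ nnn H
end

/-- The rules of a formula, as antecedent/consequent pairs. -/
def rules : Formula σ → Set (Formula σ × Formula σ)
  | .atom _ => ∅
  | .conj _ f => ⋃ i, rules (f i)
  | .disj _ f => ⋃ i, rules (f i)
  | .imp G H => insert (G, H) (rules H)

/-- Edge relation of the positive dependency graph `DG_A[F]` (vertex set `A`). -/
noncomputable def DGEdge (F : Formula σ) (A : Set σ) (p q : σ) : Prop :=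
  p ∈ A ∧ q ∈ A ∧ ∃ R ∈ rules F, p ∈ spos R.2 ∧ q ∈ pnn R.1

/-- The atoms occurring in a formula. -/
def atoms : Formula σ → Set σ
  | .atom p => {p}
  | .conj _ f => ⋃ i, atoms (f i)
  | .disj _ f => ⋃ i, atoms (f i)
  | .imp G H => atoms G ∪ atoms H

/-- `G` is a definition for the set `Q` of atoms: a conjunction of formulas
`H ∧ C^∧ → q` with `q ∈ Q`, `C ⊆ Q`, and no atom of `Q` occurring in `H`. -/
def IsDefinition (Q : Set σ) (G : Formula σ) : Prop :=
  ∃ (ι : Type) (g : ι → Formula σ), G = Formula.conj ι g ∧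
    ∀ i, ∃ (H : Formula σ) (C : Set σ) (q : σ),
      q ∈ Q ∧ C ⊆ Q ∧ (∀ p ∈ Q, p ∉ atoms H) ∧
      g i = Formula.imp (Formula.and H (conjAtoms C)) (Formula.atom q)

end Formula

section Graph

variable {V : Type*}

/-- An infinite walk in the directed graph with edge relation `E`. -/
def IsInfWalk (E : V → V → Prop) (w : ℕ → V) : Prop := ∀ i, E (w i) (w (i + 1))

/-- The partition `{P₁, P₂}` is infinitely separable: every infinite walk
visits `P₁` or `P₂` only finitely often. -/
def InfSeparable (E : V → V → Prop) (P1 P2 : Set V) : Prop :=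
  ∀ w : ℕ → V, IsInfWalk E w → {i | w i ∈ P1}.Finite ∨ {i | w i ∈ P2}.Finite

/-- `u` and `v` are in the same strongly connected component:
each is reachable from the other. -/
def SameSCC (E : V → V → Prop) (u v : V) : Prop :=
  Relation.ReflTransGen E u v ∧ Relation.ReflTransGen E v u

/-- The partition `{P₁, P₂}` is separable: every strongly connected
component is contained in `P₁` or in `P₂`. -/
def Separable (E : V → V → Prop) (P1 P2 : Set V) : Prop :=
  ∀ u v, SameSCC E u v → ((u ∈ P1 ∧ v ∈ P1) ∨ (u ∈ P2 ∧ v ∈ P2))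

end Graph

namespace Formula

variable {σ : Type}

@[simp]
theorem sat_and {J : Set σ} {G H : Formula σ} : Sat J (G.and H) ↔ Sat J G ∧ Sat J H :=
  ⟨fun h => ⟨h true, h false⟩, fun ⟨hG, hH⟩ b => b.casesOn hH hG⟩

@[simp]
theorem sat_conjAtoms {J S : Set σ} : Sat J (conjAtoms S) ↔ S ⊆ J :=
  ⟨fun h p hp => h ⟨p, hp⟩, fun h p => h p.2⟩

end Formula

/-- `I` is an `A`-stable model of `F` iff `I` is a minimal model
w.r.t. set inclusion of `F^I ∧ ⋀_{p ∈ I \ A} p`. -/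
theorem astable_iff_minimal_model_reduct_conj {σ : Type}
    (F : Formula σ) (A I : Set σ) :
    Formula.AStable A I F ↔
      (Formula.Sat I (Formula.and (Formula.reduct I F) (Formula.conjAtoms (I \ A))) ∧
        ∀ J : Set σ, J ⊆ I →
          Formula.Sat J (Formula.and (Formula.reduct I F) (Formula.conjAtoms (I \ A))) →
          J = I) := by
  simp only [Formula.AStable, Formula.sat_and, Formula.sat_conjAtoms, Set.sdiff_subset, and_true]
  refine and_congr_right fun _ => forall₂_congr fun J _ => ?_
  rw [Set.sdiff_subset_comm, and_imp]
  exact Imp.swap
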